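/- Let ϱ, a : ℝ³ → ℝ be smooth and define the scalar functions H₃ = Σ ε^{i₁i₂i₃} ε^{j₁j₂j₃} (∂_{j₁}ϱ)(∂_{i₁}∂_{j₂}ϱ)(∂_{i₂}a)(∂_{i₃}∂_{j₃}a), H₄ = Σ ε^{i₁i₂i₃} ε^{j₁j₂j₃} (∂_{i₁}∂_{j₁}ϱ)(∂_{j₂}ϱ)(∂_{i₂}a)(∂_{i₃}∂_{j₃}a), and H₇ = Σ ε^{i₁i₂i₃} ε^{j₁j₂j₃} (∂_{i₁}ϱ)(∂_{i₂}∂_{j₁}ϱ)(∂_{i₃}∂_{j₂}a)(∂_{j₃}a), each sum over all i₁,i₂,i₃,j₁,j₂,j₃ ∈ {1,2,3}. Then, identically on ℝ³, H₃ = −H₄ and H₄ = H₇. Equivalently, the Nambu micro-graphs encoded [2,3,4;1,2,4], [1,3,4;1,2,4] and [1,2,3;2,3,4] are synonyms: φ of the first equals minus φ of each of the other two. -/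

import Mathlib

/-- The partial derivative `∂/∂xⁱ` of a function on `ℝ³ ≃ (Fin 3 → ℝ)`. -/
noncomputable def pd (i : Fin 3) (f : (Fin 3 → ℝ) → ℝ) : (Fin 3 → ℝ) → ℝ :=
  fun x => fderiv ℝ f x (Pi.single i 1)

/-- The totally antisymmetric three-index Levi-Civita symbol with `ε⁰¹² = 1`
(indices `1, 2, 3` of the paper are `0, 1, 2` here), via the Vandermonde formula. -/
noncomputable def eps (i j k : Fin 3) : ℝ :=
  (((j : ℝ) - (i : ℝ)) * ((k : ℝ) - (i : ℝ)) * ((k : ℝ) - (j : ℝ))) / 2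

/-- `H₃ = φ([2,3,4;1,2,4])`, the Hamiltonian
`Σ ε^{i₁i₂i₃} ε^{j₁j₂j₃} (∂_{j₁}ϱ)(∂_{i₁}∂_{j₂}ϱ)(∂_{i₂}a)(∂_{i₃}∂_{j₃}a)`. -/
noncomputable def H₃ (ϱ a : (Fin 3 → ℝ) → ℝ) (x : Fin 3 → ℝ) : ℝ :=
  ∑ i₁ : Fin 3, ∑ i₂ : Fin 3, ∑ i₃ : Fin 3, ∑ j₁ : Fin 3, ∑ j₂ : Fin 3, ∑ j₃ : Fin 3,
    eps i₁ i₂ i₃ * eps j₁ j₂ j₃ *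
      (pd j₁ ϱ x * pd i₁ (pd j₂ ϱ) x * pd i₂ a x * pd i₃ (pd j₃ a) x)

/-- `H₄ = φ([1,3,4;1,2,4])`, the Hamiltonian
`Σ ε^{i₁i₂i₃} ε^{j₁j₂j₃} (∂_{i₁}∂_{j₁}ϱ)(∂_{j₂}ϱ)(∂_{i₂}a)(∂_{i₃}∂_{j₃}a)`. -/
noncomputable def H₄ (ϱ a : (Fin 3 → ℝ) → ℝ) (x : Fin 3 → ℝ) : ℝ :=
  ∑ i₁ : Fin 3, ∑ i₂ : Fin 3, ∑ i₃ : Fin 3, ∑ j₁ : Fin 3, ∑ j₂ : Fin 3, ∑ j₃ : Fin 3,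
    eps i₁ i₂ i₃ * eps j₁ j₂ j₃ *
      (pd i₁ (pd j₁ ϱ) x * pd j₂ ϱ x * pd i₂ a x * pd i₃ (pd j₃ a) x)

/-- `H₇ = φ([1,2,3;2,3,4])`, the Hamiltonian
`Σ ε^{i₁i₂i₃} ε^{j₁j₂j₃} (∂_{i₁}ϱ)(∂_{i₂}∂_{j₁}ϱ)(∂_{i₃}∂_{j₂}a)(∂_{j₃}a)`. -/
noncomputable def H₇ (ϱ a : (Fin 3 → ℝ) → ℝ) (x : Fin 3 → ℝ) : ℝ :=
  ∑ i₁ : Fin 3, ∑ i₂ : Fin 3, ∑ i₃ : Fin 3, ∑ j₁ : Fin 3, ∑ j₂ : Fin 3, ∑ j₃ : Fin 3,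
    eps i₁ i₂ i₃ * eps j₁ j₂ j₃ *
      (pd i₁ ϱ x * pd i₂ (pd j₁ ϱ) x * pd i₃ (pd j₂ a) x * pd j₃ a x)

/-! ### Auxiliary lemmas -/

lemma eps_swap12' (a b c : Fin 3) : eps b a c = -eps a b c := by unfold eps; ring

lemma eps_swap23' (a b c : Fin 3) : eps a c b = -eps a b c := by unfold eps; ring

lemma sum3_congr {f g : Fin 3 → Fin 3 → Fin 3 → ℝ} (h : ∀ a b c, f a b c = g a b c) :
    (∑ a : Fin 3, ∑ b : Fin 3, ∑ c : Fin 3, f a b c)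
      = ∑ a : Fin 3, ∑ b : Fin 3, ∑ c : Fin 3, g a b c := by
  simp only [h]

lemma sum_swap12 (F : Fin 3 → Fin 3 → Fin 3 → ℝ) :
    (∑ a : Fin 3, ∑ b : Fin 3, ∑ c : Fin 3, eps a b c * F a b c)
      = -∑ a : Fin 3, ∑ b : Fin 3, ∑ c : Fin 3, eps a b c * F b a c := by
  have h1 : (∑ a : Fin 3, ∑ b : Fin 3, ∑ c : Fin 3, eps a b c * F b a c)
      = ∑ b : Fin 3, ∑ a : Fin 3, ∑ c : Fin 3, eps a b c * F b a c := Finset.sum_comm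
  have h2 : ∀ a b c : Fin 3, eps b a c * F a b c = -(eps a b c * F a b c) := by
    intro a b c; rw [eps_swap12']; ring
  rw [h1]
  simp only [h2, Finset.sum_neg_distrib, neg_neg]

lemma sum_swap23 (F : Fin 3 → Fin 3 → Fin 3 → ℝ) :
    (∑ a : Fin 3, ∑ b : Fin 3, ∑ c : Fin 3, eps a b c * F a b c)
      = -∑ a : Fin 3, ∑ b : Fin 3, ∑ c : Fin 3, eps a b c * F a c b := by
  have h1 : ∀ a : Fin 3, (∑ b : Fin 3, ∑ c : Fin 3, eps a b c * F a c b)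
      = ∑ c : Fin 3, ∑ b : Fin 3, eps a b c * F a c b := fun a => Finset.sum_comm
  have h2 : ∀ a b c : Fin 3, eps a c b * F a b c = -(eps a b c * F a b c) := by
    intro a b c; rw [eps_swap23']; ring
  simp only [h1, h2, Finset.sum_neg_distrib, neg_neg]
  exact Finset.sum_congr rfl fun a _ => Finset.sum_comm

lemma sum6_comm (G : Fin 3 → Fin 3 → Fin 3 → Fin 3 → Fin 3 → Fin 3 → ℝ) :
    (∑ a : Fin 3, ∑ b : Fin 3, ∑ c : Fin 3, ∑ d : Fin 3, ∑ e : Fin 3, ∑ f : Fin 3, G a b c d e f)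
      = ∑ d : Fin 3, ∑ e : Fin 3, ∑ f : Fin 3, ∑ a : Fin 3, ∑ b : Fin 3, ∑ c : Fin 3,
          G a b c d e f := by
  calc (∑ a : Fin 3, ∑ b : Fin 3, ∑ c : Fin 3, ∑ d : Fin 3, ∑ e : Fin 3, ∑ f : Fin 3,
          G a b c d e f)
      = ∑ p : Fin 3 × Fin 3 × Fin 3, ∑ q : Fin 3 × Fin 3 × Fin 3,
          G p.1 p.2.1 p.2.2 q.1 q.2.1 q.2.2 := by
        simp [Fintype.sum_prod_type]
    _ = ∑ q : Fin 3 × Fin 3 × Fin 3, ∑ p : Fin 3 × Fin 3 × Fin 3,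
          G p.1 p.2.1 p.2.2 q.1 q.2.1 q.2.2 := Finset.sum_comm
    _ = _ := by simp [Fintype.sum_prod_type]

lemma sum6_congr {f g : Fin 3 → Fin 3 → Fin 3 → Fin 3 → Fin 3 → Fin 3 → ℝ}
    (h : ∀ a b c d e k, f a b c d e k = g a b c d e k) :
    (∑ a : Fin 3, ∑ b : Fin 3, ∑ c : Fin 3, ∑ d : Fin 3, ∑ e : Fin 3, ∑ k : Fin 3,
        f a b c d e k)
      = ∑ a : Fin 3, ∑ b : Fin 3, ∑ c : Fin 3, ∑ d : Fin 3, ∑ e : Fin 3, ∑ k : Fin 3,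
          g a b c d e k := by
  simp only [h]

/-- The purely combinatorial core: with `r, u` first-derivative data and symmetric
second-derivative data `s, t`, the three contraction patterns agree up to sign. -/
lemma key_sum (r u : Fin 3 → ℝ) (s t : Fin 3 → Fin 3 → ℝ)
    (hs : ∀ i j, s i j = s j i) (ht : ∀ i j, t i j = t j i) :
    ((∑ i₁ : Fin 3, ∑ i₂ : Fin 3, ∑ i₃ : Fin 3, ∑ j₁ : Fin 3, ∑ j₂ : Fin 3, ∑ j₃ : Fin 3,
        eps i₁ i₂ i₃ * eps j₁ j₂ j₃ * (r j₁ * s i₁ j₂ * u i₂ * t i₃ j₃))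
      = -∑ i₁ : Fin 3, ∑ i₂ : Fin 3, ∑ i₃ : Fin 3, ∑ j₁ : Fin 3, ∑ j₂ : Fin 3, ∑ j₃ : Fin 3,
          eps i₁ i₂ i₃ * eps j₁ j₂ j₃ * (s i₁ j₁ * r j₂ * u i₂ * t i₃ j₃)) ∧
    ((∑ i₁ : Fin 3, ∑ i₂ : Fin 3, ∑ i₃ : Fin 3, ∑ j₁ : Fin 3, ∑ j₂ : Fin 3, ∑ j₃ : Fin 3,
        eps i₁ i₂ i₃ * eps j₁ j₂ j₃ * (s i₁ j₁ * r j₂ * u i₂ * t i₃ j₃))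
      = ∑ i₁ : Fin 3, ∑ i₂ : Fin 3, ∑ i₃ : Fin 3, ∑ j₁ : Fin 3, ∑ j₂ : Fin 3, ∑ j₃ : Fin 3,
          eps i₁ i₂ i₃ * eps j₁ j₂ j₃ * (r i₁ * s i₂ j₁ * t i₃ j₂ * u j₃)) := by
  -- Part 1 : `S₃ = -S₄`, by swapping `j₁ ↔ j₂`.
  have eA : ∀ i₁ i₂ i₃ : Fin 3,
      (∑ j₁ : Fin 3, ∑ j₂ : Fin 3, ∑ j₃ : Fin 3,
          eps i₁ i₂ i₃ * eps j₁ j₂ j₃ * (r j₁ * s i₁ j₂ * u i₂ * t i₃ j₃))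
        = -∑ j₁ : Fin 3, ∑ j₂ : Fin 3, ∑ j₃ : Fin 3,
            eps i₁ i₂ i₃ * eps j₁ j₂ j₃ * (s i₁ j₁ * r j₂ * u i₂ * t i₃ j₃) := by
    intro i₁ i₂ i₃
    calc (∑ j₁ : Fin 3, ∑ j₂ : Fin 3, ∑ j₃ : Fin 3,
            eps i₁ i₂ i₃ * eps j₁ j₂ j₃ * (r j₁ * s i₁ j₂ * u i₂ * t i₃ j₃))
        = ∑ a : Fin 3, ∑ b : Fin 3, ∑ c : Fin 3,
            eps a b c * (eps i₁ i₂ i₃ * (r a * s i₁ b * u i₂ * t i₃ c)) :=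
          sum3_congr fun a b c => by ring
      _ = -∑ a : Fin 3, ∑ b : Fin 3, ∑ c : Fin 3,
            eps a b c * (eps i₁ i₂ i₃ * (r b * s i₁ a * u i₂ * t i₃ c)) :=
          sum_swap12 fun a b c => eps i₁ i₂ i₃ * (r a * s i₁ b * u i₂ * t i₃ c)
      _ = -∑ j₁ : Fin 3, ∑ j₂ : Fin 3, ∑ j₃ : Fin 3,
            eps i₁ i₂ i₃ * eps j₁ j₂ j₃ * (s i₁ j₁ * r j₂ * u i₂ * t i₃ j₃) := by
          rw [sum3_congr (f := fun a b c =>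
            eps a b c * (eps i₁ i₂ i₃ * (r b * s i₁ a * u i₂ * t i₃ c)))
            (g := fun a b c =>
              eps i₁ i₂ i₃ * eps a b c * (s i₁ a * r b * u i₂ * t i₃ c))
            (fun a b c => by ring)]
  have part1 :
      (∑ i₁ : Fin 3, ∑ i₂ : Fin 3, ∑ i₃ : Fin 3, ∑ j₁ : Fin 3, ∑ j₂ : Fin 3, ∑ j₃ : Fin 3,
          eps i₁ i₂ i₃ * eps j₁ j₂ j₃ * (r j₁ * s i₁ j₂ * u i₂ * t i₃ j₃))
        = -∑ i₁ : Fin 3, ∑ i₂ : Fin 3, ∑ i₃ : Fin 3, ∑ j₁ : Fin 3, ∑ j₂ : Fin 3, ∑ j₃ : Fin 3,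
            eps i₁ i₂ i₃ * eps j₁ j₂ j₃ * (s i₁ j₁ * r j₂ * u i₂ * t i₃ j₃) := by
    simp only [eA, Finset.sum_neg_distrib]
  refine ⟨part1, ?_⟩
  -- Part 2 : `S₄ = S₇`.  We show `S₇ = -S₃` and use Part 1.
  have part2 :
      (∑ i₁ : Fin 3, ∑ i₂ : Fin 3, ∑ i₃ : Fin 3, ∑ j₁ : Fin 3, ∑ j₂ : Fin 3, ∑ j₃ : Fin 3,
          eps i₁ i₂ i₃ * eps j₁ j₂ j₃ * (r i₁ * s i₂ j₁ * t i₃ j₂ * u j₃))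
        = -∑ i₁ : Fin 3, ∑ i₂ : Fin 3, ∑ i₃ : Fin 3, ∑ j₁ : Fin 3, ∑ j₂ : Fin 3, ∑ j₃ : Fin 3,
            eps i₁ i₂ i₃ * eps j₁ j₂ j₃ * (r j₁ * s i₁ j₂ * u i₂ * t i₃ j₃) := by
    calc (∑ i₁ : Fin 3, ∑ i₂ : Fin 3, ∑ i₃ : Fin 3, ∑ j₁ : Fin 3, ∑ j₂ : Fin 3, ∑ j₃ : Fin 3,
            eps i₁ i₂ i₃ * eps j₁ j₂ j₃ * (r i₁ * s i₂ j₁ * t i₃ j₂ * u j₃))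
        = ∑ a : Fin 3, ∑ b : Fin 3, ∑ c : Fin 3, ∑ x : Fin 3, ∑ y : Fin 3, ∑ z : Fin 3,
            eps x y z * eps a b c * (r x * s y a * t z b * u c) :=
          sum6_comm fun x y z a b c => eps x y z * eps a b c * (r x * s y a * t z b * u c)
      _ = ∑ a : Fin 3, ∑ b : Fin 3, ∑ c : Fin 3,
            eps a b c * ∑ x : Fin 3, ∑ y : Fin 3, ∑ z : Fin 3,
              eps x y z * (r x * s y a * t z b * u c) := by
          simp only [Finset.mul_sum]
          exact sum6_congr fun a b c x y z => by ring
      _ = -∑ a : Fin 3, ∑ b : Fin 3, ∑ c : Fin 3,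
            eps a b c * ∑ x : Fin 3, ∑ y : Fin 3, ∑ z : Fin 3,
              eps x y z * (r x * s y a * t z c * u b) :=
          sum_swap23 fun a b c => ∑ x : Fin 3, ∑ y : Fin 3, ∑ z : Fin 3,
            eps x y z * (r x * s y a * t z b * u c)
      _ = -∑ i₁ : Fin 3, ∑ i₂ : Fin 3, ∑ i₃ : Fin 3, ∑ j₁ : Fin 3, ∑ j₂ : Fin 3, ∑ j₃ : Fin 3,
            eps i₁ i₂ i₃ * eps j₁ j₂ j₃ * (r j₁ * s i₁ j₂ * u i₂ * t i₃ j₃) := by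
          congr 1
          simp only [Finset.mul_sum]
          exact sum6_congr fun a b c x y z => by rw [hs y a, ht z c]; ring
  rw [part2]
  rw [part1, neg_neg]

lemma coe_top_le₂ : (2 : WithTop ℕ∞) ≤ ((⊤ : ℕ∞) : WithTop ℕ∞) := by
  rw [show ((2 : WithTop ℕ∞)) = ((2 : ℕ∞) : WithTop ℕ∞) by rfl]
  exact WithTop.coe_le_coe.mpr le_top

/-- Symmetry of second partial derivatives for smooth functions (Clairaut). -/
lemma pd_swap {f : (Fin 3 → ℝ) → ℝ} (hf : ContDiff ℝ (⊤ : ℕ∞) f) (i j : Fin 3) (x : Fin 3 → ℝ) :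
    pd i (pd j f) x = pd j (pd i f) x := by
  have hsym : IsSymmSndFDerivAt ℝ f x := (hf.contDiffAt).isSymmSndFDerivAt (by rw [minSmoothness_of_isRCLikeNormedField]; exact coe_top_le₂)
  have hdf : DifferentiableAt ℝ (fderiv ℝ f) x := by
    have h2 : ContDiff ℝ (⊤ : ℕ∞) (fderiv ℝ f) := by
      apply hf.fderiv_right
      rw [show ((1 : WithTop ℕ∞)) = ((1 : ℕ∞) : WithTop ℕ∞) by rfl, ← WithTop.coe_add]
      exact WithTop.coe_le_coe.mpr le_top
    apply h2.differentiable
    exact WithTop.coe_ne_zero.mpr ENat.top_ne_zero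
  have key : ∀ k l : Fin 3, pd k (pd l f) x
      = fderiv ℝ (fderiv ℝ f) x (Pi.single k 1) (Pi.single l 1) := by
    intro k l
    show fderiv ℝ (fun y => fderiv ℝ f y (Pi.single l 1)) x (Pi.single k 1) = _
    rw [fderiv_clm_apply hdf (differentiableAt_const _)]
    simp
  rw [key, key, hsym]

/-- For smooth `ϱ, a : ℝ³ → ℝ`, the Hamiltonians of the Nambu micro-graphs
`[2,3,4;1,2,4]`, `[1,3,4;1,2,4]`, `[1,2,3;2,3,4]` satisfy `H₃ = −H₄` and
`H₄ = H₇` identically on `ℝ³`: these graphs are synonyms. -/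
theorem hamiltonian_synonyms_3d
    (ϱ a : (Fin 3 → ℝ) → ℝ) (hϱ : ContDiff ℝ (⊤ : ℕ∞) ϱ) (ha : ContDiff ℝ (⊤ : ℕ∞) a) :
    ∀ x : Fin 3 → ℝ, H₃ ϱ a x = -H₄ ϱ a x ∧ H₄ ϱ a x = H₇ ϱ a x := by
  intro x
  have h := key_sum (fun k => pd k ϱ x) (fun k => pd k a x)
    (fun k l => pd k (pd l ϱ) x) (fun k l => pd k (pd l a) x)
    (fun i j => pd_swap hϱ i j x) (fun i j => pd_swap ha i j x)
  exact ⟨h.1, h.2⟩
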